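/- arXiv:math/0512546 — 3 statements merged into one kernel-verified Lean document; each statement's English description precedes it below -/
import Mathlib

section
/- Let μ* be an upward continuous outer measure on a set X. If 𝔬(X, μ*) < 𝔟, then GES(X, μ*) holds. -/
open MeasureTheory Filter Set

/-- Eventual domination: `α ≤* β` iff `α n ≤ β n` for all but finitely many `n`. -/
def EvDom (α β : ℕ → ℕ) : Prop := ∀ᶠ n in atTop, α n ≤ β n

/-- The bounding number `𝔟`: the least cardinality of a family of sequences unbounded
in the eventual-domination order. -/
noncomputable def bNum : Cardinal :=
  sInf {c | ∃ S : Set (ℕ → ℕ), ¬ (∃ β, ∀ α ∈ S, EvDom α β) ∧ Cardinal.mk S = c}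

/-- `μ` is an upward continuous outer measure. -/
def UpCont {X : Type*} (μ : OuterMeasure X) : Prop :=
  ∀ A : ℕ → Set X,
    Tendsto (fun n => μ (⋃ k < n, A k)) atTop (nhds (μ (⋃ n, A n)))

/-- `GES(X, μ*)`: for every pointwise vanishing sequence `F` of real-valued functions on
`X` and each `M < μ*(X)` there is `A ⊆ X` with `μ*(A) > M` on which `F` converges
uniformly to `0`. -/
def GES {X : Type*} (μ : OuterMeasure X) : Prop :=
  ∀ F : ℕ → X → ℝ, (∀ x, Tendsto (fun n => F n x) atTop (nhds 0)) →
    ∀ M < μ Set.univ, ∃ A : Set X, M < μ A ∧ TendstoUniformlyOn F 0 atTop A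

/-- `𝔬(X, μ*)`: the least cardinality of a subset of `X` of full outer measure. -/
noncomputable def oNum {X : Type*} (μ : OuterMeasure X) : Cardinal :=
  sInf {c | ∃ Y : Set X, μ Y = μ Set.univ ∧ Cardinal.mk Y = c}

/-- If `𝔬(X, μ*) < 𝔟` then `GES(X, μ*)` holds. -/
theorem stmt8 {X : Type u} (μ : OuterMeasure X) (hμ : UpCont μ)
    (h : Cardinal.lift.{0} (oNum μ) < Cardinal.lift.{u} bNum) :
    GES μ := by
  intro F hF M hM
  have hne : {c | ∃ Y : Set X, μ Y = μ Set.univ ∧ Cardinal.mk Y = c}.Nonempty :=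
    ⟨_, Set.univ, rfl, rfl⟩
  have hmem : oNum μ ∈ {c | ∃ Y : Set X, μ Y = μ Set.univ ∧ Cardinal.mk Y = c} :=
    csInf_mem hne
  obtain ⟨Y, hYμ, hYc⟩ := hmem
  have hα : ∀ x : X, ∀ m : ℕ, ∃ N : ℕ, ∀ n ≥ N, |F n x| ≤ 1/(m+1) := by
    intro x m
    obtain ⟨N, hN⟩ := Metric.tendsto_atTop.mp (hF x) (1/(m+1)) (by positivity)
    refine ⟨N, fun n hn => ?_⟩
    have := hN n hn
    rw [Real.dist_eq, sub_zero] at this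
    exact this.le
  choose α hα' using hα
  set S : Set (ℕ → ℕ) := α '' Y with hSdef
  let f : Y → S := fun y => ⟨α y, Set.mem_image_of_mem α y.2⟩
  have hsurj : Function.Surjective f := by
    rintro ⟨s, x, hx, rfl⟩
    exact ⟨⟨x, hx⟩, rfl⟩
  have h1 : Cardinal.lift.{u} (Cardinal.mk S) ≤ Cardinal.lift.{0} (Cardinal.mk Y) :=
    Cardinal.lift_mk_le'.mpr ⟨Function.Embedding.ofSurjective _ hsurj⟩
  have hS : Cardinal.mk S < bNum := by
    have hlt : Cardinal.lift.{u} (Cardinal.mk S) < Cardinal.lift.{u} bNum := by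
      calc Cardinal.lift.{u} (Cardinal.mk S) ≤ Cardinal.lift.{0} (Cardinal.mk Y) := h1
        _ = Cardinal.lift.{0} (oNum μ) := by rw [hYc]
        _ < Cardinal.lift.{u} bNum := h
    exact Cardinal.lift_lt.mp hlt
  have hbd : ∃ β, ∀ γ ∈ S, EvDom γ β := by
    by_contra hc
    have hmem2 : Cardinal.mk S ∈
        {c | ∃ T : Set (ℕ → ℕ), ¬ (∃ β, ∀ α ∈ T, EvDom α β) ∧ Cardinal.mk T = c} :=
      ⟨S, hc, rfl⟩
    have hle2 : bNum ≤ Cardinal.mk S := csInf_le (OrderBot.bddBelow _) hmem2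
    exact absurd hle2 hS.not_ge
  obtain ⟨β, hβ⟩ := hbd
  set A : ℕ → Set X := fun k => {x | x ∈ Y ∧ ∀ m ≥ k, α x m ≤ β m} with hAdef
  have hAY : (⋃ k, A k) = Y := by
    apply Set.Subset.antisymm
    · exact Set.iUnion_subset fun k x hx => hx.1
    · intro x hx
      obtain ⟨k, hk⟩ := eventually_atTop.mp (hβ (α x) ⟨x, hx, rfl⟩)
      exact Set.mem_iUnion.mpr ⟨k, hx, hk⟩
  have hMlt : M < μ (⋃ n, A n) := by rw [hAY, hYμ]; exact hM
  obtain ⟨n, hn⟩ := ((hμ A).eventually (eventually_gt_nhds hMlt)).exists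
  refine ⟨⋃ k < n, A k, hn, ?_⟩
  rw [Metric.tendstoUniformlyOn_iff]
  intro ε hε
  obtain ⟨m0, hm0⟩ := exists_nat_gt (1/ε)
  set m := max n m0 with hm
  have hεm : 1/((m:ℝ)+1) < ε := by
    rw [div_lt_iff₀ (by positivity)]
    rw [div_lt_iff₀ hε] at hm0
    have hm0m : (m0:ℝ) ≤ (m:ℝ)+1 := by
      have : (m0:ℝ) ≤ (m:ℝ) := Nat.cast_le.mpr (le_max_right _ _)
      linarith
    nlinarith
  filter_upwards [eventually_ge_atTop (β m)] with j hj x hx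
  simp only [Set.mem_iUnion] at hx
  obtain ⟨k, hk, hxk⟩ := hx
  have hxm : α x m ≤ β m := hxk.2 m (le_trans (le_of_lt hk) (le_max_left _ _))
  have hle : |F j x| ≤ 1/(m+1) := hα' x m j (le_trans hxm hj)
  have hd : dist ((0 : X → ℝ) x) (F j x) = |F j x| := by
    simp [Real.dist_eq, abs_sub_comm]
  rw [hd]
  exact lt_of_le_of_lt hle hεm
end

section
/- Let μ* be an upward continuous outer measure on a set X with 0 < μ*(X), and assume 𝔬(X, μ*) = |X| = 𝔟. Then GES(X, μ*) fails. -/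
open MeasureTheory Filter Set

/-!
If `GES` held, a family `(α x)_{x ∈ X}` of sequences could be turned into a pointwise
vanishing sequence of functions whose uniform convergence on `A` bounds `{α x | x ∈ A}`
everywhere; the countably many sets `A` given by `GES` for `M → μ*(X)` then cover a set of full
outer measure, hence of size `|X|`, on which the family is `≤*`-bounded. Indexing `X` by `𝔟`
and letting `α ξ` bound an unbounded family below `ξ`, every `≤*`-bounded subfamily has size
`< 𝔟`.
-/

open Cardinal

namespace EvDom

theorem trans {a b c : ℕ → ℕ} (hab : EvDom a b) (hbc : EvDom b c) : EvDom a c :=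
  hab.mp (hbc.mono fun _ hbc hab => hab.trans hbc)

theorem of_le {a b : ℕ → ℕ} (h : ∀ n, a n ≤ b n) : EvDom a b :=
  Eventually.of_forall h

end EvDom

theorem exists_forall_evDom (f : ℕ → ℕ → ℕ) : ∃ β, ∀ k, EvDom (f k) β := by
  refine ⟨fun n => (Finset.range (n + 1)).sup fun k => f k n, fun k => ?_⟩
  filter_upwards [eventually_ge_atTop k] with n hn
  exact Finset.le_sup (f := fun k => f k n) (Finset.mem_range.2 (Nat.lt_succ_of_le hn))

theorem Set.Countable.exists_evDom {S : Set (ℕ → ℕ)} (hS : S.Countable) :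
    ∃ β, ∀ α ∈ S, EvDom α β := by
  rcases S.eq_empty_or_nonempty with rfl | hne
  · exact ⟨id, fun _ h => h.elim⟩
  obtain ⟨f, rfl⟩ := hS.exists_eq_range hne
  obtain ⟨β, hβ⟩ := exists_forall_evDom f
  exact ⟨β, forall_mem_range.2 hβ⟩

theorem exists_unbounded_mk_eq_bNum :
    ∃ S : Set (ℕ → ℕ), ¬ (∃ β, ∀ α ∈ S, EvDom α β) ∧ #S = bNum := by
  have hunbdd : ¬ ∃ β, ∀ α ∈ (univ : Set (ℕ → ℕ)), EvDom α β := by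
    rintro ⟨β, hβ⟩
    obtain ⟨n, hn⟩ := (hβ (β · + 1) trivial).exists
    exact (β n).not_succ_le_self hn
  exact (csInf_mem ⟨_, univ, hunbdd, rfl⟩ :
    bNum ∈ {c | ∃ S : Set (ℕ → ℕ), ¬ (∃ β, ∀ α ∈ S, EvDom α β) ∧ #S = c})

theorem exists_evDom_of_mk_lt_bNum {S : Set (ℕ → ℕ)} (h : #S < bNum) :
    ∃ β, ∀ α ∈ S, EvDom α β := by
  by_contra hS
  exact h.not_ge (csInf_le' ⟨S, hS, rfl⟩)

theorem aleph0_le_bNum : ℵ₀ ≤ bNum := by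
  obtain ⟨S, hS, hSb⟩ := exists_unbounded_mk_eq_bNum
  rw [← hSb]
  by_contra! h
  exact hS (Set.countable_coe_iff.1 (mk_le_aleph0_iff.1 h.le)).exists_evDom

theorem exists_unbounded_family :
    ∃ u : bNum.ord.ToType → ℕ → ℕ, ∀ β, ∃ ξ, ¬ EvDom (u ξ) β := by
  obtain ⟨S, hS, hSb⟩ := exists_unbounded_mk_eq_bNum
  obtain ⟨e⟩ : Nonempty (bNum.ord.ToType ≃ S) := Cardinal.eq.1 (by rw [mk_ord_toType, hSb])
  refine ⟨fun ξ => e ξ, fun β => ?_⟩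
  by_contra! h
  exact hS ⟨β, fun a ha => by simpa using h (e.symm ⟨a, ha⟩)⟩

theorem mk_Iio_lt_bNum (ξ : bNum.ord.ToType) : #(Iio ξ) < bNum := by
  simpa using mk_Iio_lt ξ (by simp)

theorem exists_family_mk_evDom_lt {X : Type u}
    (hX : lift.{0} #X = lift.{u} bNum) :
    ∃ α : X → ℕ → ℕ, ∀ β, #{x // EvDom (α x) β} < #X := by
  obtain ⟨u, hu⟩ := exists_unbounded_family
  have hseg (ξ : bNum.ord.ToType) : ∃ b, ∀ η < ξ, EvDom (u η) b := by
    obtain ⟨b, hb⟩ := exists_evDom_of_mk_lt_bNum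
      ((mk_range_le (f := fun η : Iio ξ => u η)).trans_lt (mk_Iio_lt_bNum ξ))
    exact ⟨b, fun η hη => hb _ ⟨⟨η, hη⟩, rfl⟩⟩
  choose a ha using hseg
  obtain ⟨e⟩ : Nonempty (X ≃ bNum.ord.ToType) := lift_mk_eq'.1 (by rw [hX, mk_ord_toType])
  refine ⟨fun x => a (e x), fun β => ?_⟩
  obtain ⟨η, hη⟩ := hu β
  have := noMaxOrder aleph0_le_bNum
  obtain ⟨η', hηη'⟩ := exists_gt η
  have hlt (x : X) (hx : EvDom (a (e x)) β) : e x < η' :=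
    (not_lt.1 fun h => hη ((ha _ η h).trans hx)).trans_lt hηη'
  refine (lift_lt.{u, 0}).1 ?_
  rw [hX]
  calc lift.{0} #{x // EvDom (a (e x)) β} ≤ lift.{u} #(Iio η') :=
        lift_mk_le'.2 ⟨⟨fun x => ⟨e x, hlt x x.2⟩, fun x y h => Subtype.ext (e.injective
          (congrArg Subtype.val h))⟩⟩
    _ < lift.{u} bNum := lift_lt.2 (mk_Iio_lt_bNum η')

/-- The length, capped at `n + 1`, of the longest initial segment of `a` bounded by `n`. -/
def boundedPrefixLength (a : ℕ → ℕ) (n : ℕ) : ℕ :=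
  ((Finset.range (n + 1)).filter fun k => ∀ j ≤ k, a j ≤ n).card

theorem boundedPrefixLength_le_of_lt {a : ℕ → ℕ} {m n : ℕ} (h : n < a m) :
    boundedPrefixLength a n ≤ m := by
  have hsub :
      (Finset.range (n + 1)).filter (fun k => ∀ j ≤ k, a j ≤ n) ⊆ Finset.range m := by
    intro k hk
    simp only [Finset.mem_filter, Finset.mem_range] at hk ⊢
    by_contra! hmk
    exact h.not_ge (hk.2 m hmk)
  exact (Finset.card_le_card hsub).trans_eq (Finset.card_range m)

theorem le_boundedPrefixLength {a : ℕ → ℕ} {m n : ℕ} (hm : m ≤ n)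
    (h : ∀ j ≤ m, a j ≤ n) : m + 1 ≤ boundedPrefixLength a n := by
  have hsub :
      Finset.range (m + 1) ⊆ (Finset.range (n + 1)).filter (fun k => ∀ j ≤ k, a j ≤ n) := by
    intro k hk
    simp only [Finset.mem_filter, Finset.mem_range] at hk ⊢
    exact ⟨by omega, fun j hj => h j (by omega)⟩
  exact (Finset.card_range _).symm.trans_le (Finset.card_le_card hsub)

theorem tendsto_boundedPrefixLength (a : ℕ → ℕ) :
    Tendsto (boundedPrefixLength a) atTop atTop := by
  refine tendsto_atTop_atTop.2 fun m => ⟨m + (Finset.range (m + 1)).sup a, fun n hn => ?_⟩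
  refine (Nat.le_succ m).trans (le_boundedPrefixLength (by omega) fun j hj => ?_)
  exact (Finset.le_sup (f := a) (Finset.mem_range.2 (Nat.lt_add_one_of_le hj))).trans
    (by omega)

theorem exists_forall_le_of_tendstoUniformlyOn {X : Type*} {α : X → ℕ → ℕ} {A : Set X}
    (h : TendstoUniformlyOn (fun n x => 1 / ((boundedPrefixLength (α x) n : ℝ) + 1)) 0 atTop A) :
    ∃ β : ℕ → ℕ, ∀ x ∈ A, ∀ m, α x m ≤ β m := by
  have hbound (m : ℕ) : ∃ N, ∀ x ∈ A, α x m ≤ N := by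
    obtain ⟨N, hN⟩ :=
      (Metric.tendstoUniformlyOn_iff.1 h (1 / ((m : ℝ) + 1)) (by positivity)).exists
    refine ⟨N, fun x hx => not_lt.1 fun hlt => ?_⟩
    have hsmall := hN x hx
    rw [Pi.zero_apply, dist_zero_left, Real.norm_of_nonneg (by positivity),
      one_div_lt_one_div (by positivity) (by positivity)] at hsmall
    have := boundedPrefixLength_le_of_lt hlt
    exact hsmall.not_ge (by exact_mod_cast Nat.succ_le_succ this)
  choose β hβ using hbound
  exact ⟨β, fun x hx m => hβ m x hx⟩

theorem GES.exists_evDom_of_measure_eq {X : Type*} {μ : OuterMeasure X} (hG : GES μ)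
    (hpos : 0 < μ univ) (α : X → ℕ → ℕ) :
    ∃ B : Set X, μ B = μ univ ∧ ∃ β, ∀ x ∈ B, EvDom (α x) β := by
  obtain ⟨M, -, hM, hMlim⟩ := exists_seq_strictMono_tendsto' hpos
  choose A hAμ hAunif using fun n => hG _
    (fun x => tendsto_one_div_add_atTop_nhds_zero_nat.comp (tendsto_boundedPrefixLength (α x)))
    (M n) (hM n).2
  choose βs hβs using fun n => exists_forall_le_of_tendstoUniformlyOn (hAunif n)
  obtain ⟨β, hβ⟩ := exists_forall_evDom βs
  refine ⟨⋃ n, A n, ?_, β, fun x hx => ?_⟩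
  · exact le_antisymm (measure_mono (subset_univ _)) (le_of_tendsto' hMlim fun n =>
      (hAμ n).le.trans (measure_mono (subset_iUnion A n)))
  · obtain ⟨n, hn⟩ := mem_iUnion.1 hx
    exact (EvDom.of_le (hβs n x hn)).trans (hβ n)

theorem stmt10_general {X : Type u} (μ : OuterMeasure X)
    (hpos : 0 < μ Set.univ)
    (ho : oNum μ = Cardinal.mk X)
    (hb : Cardinal.lift.{0} (Cardinal.mk X) = Cardinal.lift.{u} bNum) :
    ¬ GES μ := by
  intro hG
  obtain ⟨α, hα⟩ := exists_family_mk_evDom_lt hb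
  obtain ⟨B, hBμ, β, hβ⟩ := hG.exists_evDom_of_measure_eq hpos α
  have hXB : #X ≤ #B := ho ▸ csInf_le' ⟨B, hBμ, rfl⟩
  exact (hXB.trans (mk_le_mk_of_subset hβ)).not_gt (hα β)

/-- If `0 < μ*(X)` and `𝔬(X, μ*) = |X| = 𝔟`, then `GES(X, μ*)`
fails. -/
theorem stmt10 {X : Type u} (μ : OuterMeasure X) (hμ : UpCont μ)
    (hpos : 0 < μ Set.univ)
    (ho : oNum μ = Cardinal.mk X)
    (hb : Cardinal.lift.{0} (Cardinal.mk X) = Cardinal.lift.{u} bNum) :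
    ¬ GES μ :=
  stmt10_general μ hpos ho hb
end

section
/- Let μ* be an upward continuous outer measure on a set X with 0 < μ*(X), let κ be a cardinal with 𝔬(X, μ*) = |X| = κ, and assume there exists a κ-Lusin set. Then GES(X, μ*) fails. -/
open MeasureTheory Filter Set

/-- A `κ`-Lusin set: a subset of `ℝ` of cardinality `κ` all of whose meager subsets have
cardinality less than `κ`. -/
def IsLusinSet (κ : Cardinal) (L : Set ℝ) : Prop :=
  Cardinal.mk L = κ ∧ ∀ M ⊆ L, IsMeagre M → Cardinal.mk M < κ

open Topology Metric

/-!
Enumerate a dense subset of `ℝ` as `q` and let `nearIndex q n x` be the least `k` with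
`q k ≠ x` and `dist x (q k) < 1 / (n + 1)`. For fixed `x` it tends to infinity, so
`1 / (nearIndex q n x + 1) → 0` pointwise. If the convergence is uniform on `S`, then for each `k`
some `nearIndex q n` exceeds `k` on all of `S`, so `S` misses a punctured ball around `q k`;
since the `q k` are dense, `S` is nowhere dense.

Transport this sequence to `X` along a bijection with a `κ`-Lusin set `L`. GES yields countably
many sets of uniform convergence whose union has full outer measure, hence cardinality
`𝔬(X, μ*) = κ`; its image in `L` is meagre of cardinality `κ`, which a `κ`-Lusin set forbids.
-/

section NearIndex

variable {α : Type*} [MetricSpace α] {q : ℕ → α}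

-- `sInf ∅ = 0`, but the set is nonempty when `q` has dense range and `α` has no isolated points.
noncomputable def nearIndex (q : ℕ → α) (n : ℕ) (x : α) : ℕ :=
  sInf {k | q k ∈ ball x (1 / (n + 1)) \ {x}}

lemma nearIndex_le {n k : ℕ} {x : α} (h : q k ∈ ball x (1 / (n + 1)) \ {x}) :
    nearIndex q n x ≤ k :=
  Nat.sInf_le h

variable [∀ x : α, (𝓝[≠] x).NeBot]

lemma DenseRange.exists_mem_ball_diff_singleton (hq : DenseRange q) (x : α) {r : ℝ}
    (hr : 0 < r) : ∃ k, q k ∈ ball x r \ {x} :=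
  hq.exists_mem_open (isOpen_ball.sdiff isClosed_singleton)
    ((𝓝[≠] x).nonempty_of_mem (sdiff_mem_nhdsWithin_compl (ball_mem_nhds x hr) {x}))

lemma tendsto_nearIndex_atTop (hq : DenseRange q) (x : α) :
    Tendsto (nearIndex q · x) atTop atTop := by
  refine tendsto_atTop.2 fun K => ?_
  have hfar : ∀ j ∈ Finset.range K, ∀ᶠ n : ℕ in atTop, q j ∉ ball x (1 / (n + 1)) \ {x} := by
    intro j _
    rcases eq_or_ne (q j) x with hj | hj
    · exact Eventually.of_forall fun n h => h.2 hj
    · filter_upwards [tendsto_one_div_add_atTop_nhds_zero_nat.eventually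
        (ge_mem_nhds (dist_pos.2 hj))] with n hn h
      exact (mem_ball.1 h.1).not_ge hn
  filter_upwards [(Finset.eventually_all _).2 hfar] with n hn
  exact le_csInf (hq.exists_mem_ball_diff_singleton x Nat.one_div_pos_of_nat)
    fun k hk => not_lt.1 fun hkK => hn k (Finset.mem_range.2 hkK) hk

lemma isNowhereDense_of_forall_exists_lt_nearIndex (hq : DenseRange q) {S : Set α}
    (h : ∀ K, ∃ n, ∀ x ∈ S, K < nearIndex q n x) : IsNowhereDense S := by
  by_contra hS
  obtain ⟨k, hk⟩ := hq.exists_mem_open isOpen_interior (nonempty_iff_ne_empty.2 hS)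
  obtain ⟨n, hn⟩ := h k
  set V := (interior (closure S) ∩ ball (q k) (1 / (n + 1))) \ {q k}
  have hVopen : IsOpen V := (isOpen_interior.inter isOpen_ball).sdiff isClosed_singleton
  have hV : V.Nonempty := (𝓝[≠] (q k)).nonempty_of_mem <| sdiff_mem_nhdsWithin_compl
    (inter_mem (isOpen_interior.mem_nhds hk) (ball_mem_nhds _ Nat.one_div_pos_of_nat)) _
  obtain ⟨x, hxV, hxS⟩ : (V ∩ S).Nonempty := by
    rw [inter_comm, ← closure_inter_open_nonempty_iff hVopen]
    exact hV.mono fun y hy => ⟨interior_subset hy.1.1, hy⟩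
  have hqx : q k ∈ ball x (1 / (n + 1)) \ {x} :=
    ⟨mem_ball_comm.1 hxV.1.2, fun h => hxV.2 h.symm⟩
  exact (hn x hxS).not_ge (nearIndex_le hqx)

end NearIndex

lemma exists_lt_of_tendstoUniformlyOn_one_div {X : Type*} {c : ℕ → X → ℕ} {S : Set X}
    (h : TendstoUniformlyOn (fun n x => 1 / ((c n x : ℝ) + 1)) 0 atTop S) (K : ℕ) :
    ∃ n, ∀ x ∈ S, K < c n x := by
  obtain ⟨n, hn⟩ := (Metric.tendstoUniformlyOn_iff.1 h _ (Nat.one_div_pos_of_nat (n := K))).exists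
  refine ⟨n, fun x hx => ?_⟩
  have hlt := hn x hx
  rw [Pi.zero_apply, dist_zero_left, Real.norm_of_nonneg (by positivity)] at hlt
  exact_mod_cast lt_of_add_lt_add_right ((one_div_lt_one_div (by positivity) (by positivity)).1 hlt)

lemma MeasureTheory.OuterMeasure.exists_seq_measure_iUnion_eq_univ {X : Type*}
    (μ : OuterMeasure X) (hpos : 0 < μ univ) {P : Set X → Prop}
    (h : ∀ M < μ univ, ∃ A, M < μ A ∧ P A) :
    ∃ A : ℕ → Set X, (∀ n, P (A n)) ∧ μ (⋃ n, A n) = μ univ := by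
  obtain ⟨u, -, hu, hlim⟩ := exists_seq_strictMono_tendsto' hpos
  choose A hAμ hAP using fun n => h (u n) (hu n).2
  refine ⟨A, hAP, (μ.mono (subset_univ _)).antisymm ?_⟩
  exact le_of_tendsto' hlim fun n => (hAμ n).le.trans (μ.mono (subset_iUnion A n))

theorem stmt12_general {X : Type u} (μ : OuterMeasure X)
    (hpos : 0 < μ Set.univ) (κ : Cardinal.{0})
    (ho : oNum μ = Cardinal.mk X)
    (hκ : Cardinal.lift.{0} (Cardinal.mk X) = Cardinal.lift.{u} κ)
    (hL : ∃ L : Set ℝ, IsLusinSet κ L) :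
    ¬ GES μ := by
  intro hGES
  obtain ⟨L, hLκ, hLusin⟩ := hL
  obtain ⟨g⟩ := Cardinal.lift_mk_eq'.1 (hLκ ▸ hκ)
  set e : X → ℝ := fun x => g x
  have he : Function.Injective e := Subtype.val_injective.comp g.injective
  set q := TopologicalSpace.denseSeq ℝ
  have hq : DenseRange q := TopologicalSpace.denseRange_denseSeq ℝ
  obtain ⟨A, hA, hAμ⟩ := μ.exists_seq_measure_iUnion_eq_univ hpos <|
    hGES (fun n x => 1 / ((nearIndex q n (e x) : ℝ) + 1))
      fun x => tendsto_one_div_add_atTop_nhds_zero_nat.comp (tendsto_nearIndex_atTop hq (e x))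
  have hB : Cardinal.mk (⋃ n, A n) = Cardinal.mk X :=
    (Cardinal.mk_set_le _).antisymm (ho ▸ csInf_le' ⟨_, hAμ, rfl⟩)
  have hmeagre : IsMeagre (e '' ⋃ n, A n) := by
    rw [image_iUnion]
    refine isMeagre_iUnion fun n => IsNowhereDense.isMeagre ?_
    refine isNowhereDense_of_forall_exists_lt_nearIndex hq fun K => ?_
    simpa only [forall_mem_image] using exists_lt_of_tendstoUniformlyOn_one_div (hA n) K
  refine (hLusin _ (image_subset_iff.2 fun x _ => (g x).2) hmeagre).ne ?_
  rw [← Cardinal.lift_inj.{0, u}, Cardinal.mk_image_eq_lift e _ he, hB, hκ]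

/-- If `0 < μ*(X)`, `𝔬(X, μ*) = |X| = κ` and there exists a `κ`-Lusin
set, then `GES(X, μ*)` fails. -/
theorem stmt12 {X : Type u} (μ : OuterMeasure X) (hμ : UpCont μ)
    (hpos : 0 < μ Set.univ) (κ : Cardinal.{0})
    (ho : oNum μ = Cardinal.mk X)
    (hκ : Cardinal.lift.{0} (Cardinal.mk X) = Cardinal.lift.{u} κ)
    (hL : ∃ L : Set ℝ, IsLusinSet κ L) :
    ¬ GES μ :=
  stmt12_general μ hpos κ ho hκ hL
end
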